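/- arXiv:1707.02963 — 3 statements merged into one kernel-verified Lean document; each statement's English description precedes it below -/
import Mathlib

section
/- Let Q : ℝ^p → ℝ be differentiable, let w* ∈ ℝ^p, and suppose for all u with group support size at most s and all w, Q(w+u) - Q(w) - ⟨∇Q(w), u⟩ ≥ (φ₋/2)‖u‖² with φ₋ > 0. Let w ∈ ℝ^p be such that w − w* is supported on a set of groups S with |S| ≤ s, and suppose max_{g∈G} ‖∇_g Q(w)‖ ≤ ε and Q(w*) ≤ Q(w). Then ‖w − w*‖ ≤ (2ε/φ₋)·√(|S|). -/
/-!
Restricted strong convexity along `w* - w`, which is active on at most `|S|` groups, together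
with `Q w* ≤ Q w` gives `(φ₋/2)‖w - w*‖² ≤ ⟪∇Q(w), w - w*⟫`. Since the groups partition the
coordinates, this inner product splits over the groups in `S`; each term is at most
`ε ‖(w - w*)_g‖` by Cauchy–Schwarz, and `∑_{g ∈ S} ‖(w - w*)_g‖ ≤ √|S| ‖w - w*‖` by
Cauchy–Schwarz in `ℝ^S`. Dividing by `‖w - w*‖` gives the bound.
-/

/-- Restriction of a vector to the coordinates in `F` (zero outside `F`). -/
noncomputable def restr {p : ℕ} (F : Finset (Fin p)) (v : EuclideanSpace ℝ (Fin p)) :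
    EuclideanSpace ℝ (Fin p) :=
  WithLp.toLp 2 (fun i => if i ∈ F then v i else 0)

/-- Group support size: the number of groups on which `u` is nonzero. -/
noncomputable def gsupp {p m : ℕ} (F : Fin m → Finset (Fin p))
    (u : EuclideanSpace ℝ (Fin p)) : ℕ :=
  {g : Fin m | ∃ i ∈ F g, u i ≠ 0}.ncard

open Finset Function RealInnerProductSpace

section GroupNorms

variable {p m : ℕ}

theorem restr_apply (A : Finset (Fin p)) (v : EuclideanSpace ℝ (Fin p)) (i : Fin p) :
    restr A v i = if i ∈ A then v i else 0 := rfl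

theorem restr_eq_zero {A : Finset (Fin p)} {v : EuclideanSpace ℝ (Fin p)}
    (h : ∀ i ∈ A, v i = 0) : restr A v = 0 := by
  ext i
  by_cases hi : i ∈ A <;> simp [restr_apply, hi, h]

theorem inner_restr_restr (A : Finset (Fin p)) (a b : EuclideanSpace ℝ (Fin p)) :
    ⟪restr A a, restr A b⟫ = ∑ i ∈ A, a i * b i := by
  rw [PiLp.inner_apply, ← sum_subset (subset_univ A)]
  · refine sum_congr rfl fun i hi => ?_
    simp [restr_apply, hi, mul_comm]
  · intro i _ hi
    simp [restr_apply, hi]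

theorem inner_eq_sum_inner_restr {F : Fin m → Finset (Fin p)} (hdisj : Pairwise (Disjoint on F))
    (hcover : ∀ i, ∃ g, i ∈ F g) (a b : EuclideanSpace ℝ (Fin p)) :
    ⟪a, b⟫ = ∑ g, ⟪restr (F g) a, restr (F g) b⟫ := by
  have hunion : (univ : Finset (Fin p)) = univ.biUnion F := by
    ext i
    simpa using hcover i
  rw [PiLp.inner_apply, hunion, sum_biUnion (hdisj.set_pairwise _)]
  refine sum_congr rfl fun g _ => ?_
  rw [inner_restr_restr]
  exact sum_congr rfl fun i _ => mul_comm _ _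

variable {F : Fin m → Finset (Fin p)} {S : Finset (Fin m)} {v : EuclideanSpace ℝ (Fin p)}

theorem inner_eq_sum_inner_restr_of_vanishing (hdisj : Pairwise (Disjoint on F))
    (hcover : ∀ i, ∃ g, i ∈ F g) (hv : ∀ g ∉ S, ∀ i ∈ F g, v i = 0)
    (a : EuclideanSpace ℝ (Fin p)) :
    ⟪a, v⟫ = ∑ g ∈ S, ⟪restr (F g) a, restr (F g) v⟫ := by
  rw [inner_eq_sum_inner_restr hdisj hcover, sum_subset (subset_univ S)]
  intro g _ hg
  rw [restr_eq_zero (hv g hg), inner_zero_right]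

theorem sum_norm_restr_le_sqrt_card_mul_norm (hdisj : Pairwise (Disjoint on F))
    (hcover : ∀ i, ∃ g, i ∈ F g) (hv : ∀ g ∉ S, ∀ i ∈ F g, v i = 0) :
    ∑ g ∈ S, ‖restr (F g) v‖ ≤ √(#S : ℝ) * ‖v‖ := by
  have hpyth : ‖v‖ ^ 2 = ∑ g ∈ S, ‖restr (F g) v‖ ^ 2 := by
    simp only [← real_inner_self_eq_norm_sq]
    exact inner_eq_sum_inner_restr_of_vanishing hdisj hcover hv v
  rw [← pow_le_pow_iff_left₀ (sum_nonneg fun g _ => norm_nonneg _) (by positivity) two_ne_zero,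
    mul_pow, Real.sq_sqrt (Nat.cast_nonneg _), hpyth]
  exact sq_sum_le_card_mul_sum_sq

theorem inner_le_mul_sqrt_card_mul_norm (hdisj : Pairwise (Disjoint on F))
    (hcover : ∀ i, ∃ g, i ∈ F g) (hv : ∀ g ∉ S, ∀ i ∈ F g, v i = 0)
    {a : EuclideanSpace ℝ (Fin p)} {ε : ℝ} (hε : 0 ≤ ε)
    (ha : ∀ g, ‖restr (F g) a‖ ≤ ε) :
    ⟪a, v⟫ ≤ ε * (√(#S : ℝ) * ‖v‖) :=
  calc ⟪a, v⟫ = ∑ g ∈ S, ⟪restr (F g) a, restr (F g) v⟫ :=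
        inner_eq_sum_inner_restr_of_vanishing hdisj hcover hv a
    _ ≤ ∑ g ∈ S, ε * ‖restr (F g) v‖ := sum_le_sum fun g _ =>
        (real_inner_le_norm _ _).trans (mul_le_mul_of_nonneg_right (ha g) (norm_nonneg _))
    _ = ε * ∑ g ∈ S, ‖restr (F g) v‖ := (mul_sum _ _ _).symm
    _ ≤ ε * (√(#S : ℝ) * ‖v‖) :=
        mul_le_mul_of_nonneg_left (sum_norm_restr_le_sqrt_card_mul_norm hdisj hcover hv) hε

theorem gsupp_le_card (hv : ∀ g ∉ S, ∀ i ∈ F g, v i = 0) : gsupp F v ≤ #S := by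
  calc gsupp F v ≤ (S : Set (Fin m)).ncard :=
        Set.ncard_le_ncard (fun g ⟨i, hi, hvi⟩ => by_contra fun hg => hvi (hv g hg i hi))
          S.finite_toSet
    _ = #S := Set.ncard_coe_finset S

theorem gsupp_neg (F : Fin m → Finset (Fin p)) (v : EuclideanSpace ℝ (Fin p)) :
    gsupp F (-v) = gsupp F v := by
  simp [gsupp]

end GroupNorms

theorem le_of_sq_le_mul {x c : ℝ} (hc : 0 ≤ c) (h : x ^ 2 ≤ c * x) : x ≤ c := by
  nlinarith

theorem stmt6_general {p m : ℕ} (F : Fin m → Finset (Fin p))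
    (hdisj : ∀ g g', g ≠ g' → Disjoint (F g) (F g'))
    (hcover : ∀ i, ∃ g, i ∈ F g)
    (Q : EuclideanSpace ℝ (Fin p) → ℝ)
    (gradQ : EuclideanSpace ℝ (Fin p) → EuclideanSpace ℝ (Fin p))
    (s : ℕ) (φm ε : ℝ) (hφ : 0 < φm) (hε : 0 ≤ ε)
    (hsc : ∀ w u : EuclideanSpace ℝ (Fin p), gsupp F u ≤ s →
      Q (w + u) - Q w - (inner ℝ (gradQ w) u : ℝ) ≥ φm / 2 * ‖u‖ ^ 2)
    (wstar w : EuclideanSpace ℝ (Fin p)) (S : Finset (Fin m))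
    (hS : S.card ≤ s)
    (hsupp : ∀ g ∉ S, ∀ i ∈ F g, (w - wstar) i = 0)
    (hgradbd : ∀ g : Fin m, ‖restr (F g) (gradQ w)‖ ≤ ε)
    (hQ : Q wstar ≤ Q w) :
    ‖w - wstar‖ ≤ 2 * ε / φm * Real.sqrt S.card := by
  have hcurv : φm / 2 * ‖w - wstar‖ ^ 2 ≤ ⟪gradQ w, w - wstar⟫ := by
    have hrsc := hsc w (-(w - wstar))
      ((gsupp_neg F _).trans_le ((gsupp_le_card hsupp).trans hS))
    rw [inner_neg_right, norm_neg, neg_sub, add_sub_cancel] at hrsc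
    linarith
  have hholder := inner_le_mul_sqrt_card_mul_norm (fun g g' h => hdisj g g' h) hcover hsupp
    hε hgradbd
  refine le_of_sq_le_mul (by positivity) ?_
  calc ‖w - wstar‖ ^ 2 = 2 / φm * (φm / 2 * ‖w - wstar‖ ^ 2) := by field_simp
    _ ≤ 2 / φm * (ε * (√(#S : ℝ) * ‖w - wstar‖)) :=
        mul_le_mul_of_nonneg_left (hcurv.trans hholder) (by positivity)
    _ = 2 * ε / φm * √(#S : ℝ) * ‖w - wstar‖ := by ring

/-- Core estimation-error bound: restricted strong convexity plus an `ℓ_{2,∞}`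
gradient bound give `‖w − w*‖ ≤ (2ε/φ₋)·√|S|`. -/
theorem stmt6 {p m : ℕ} (F : Fin m → Finset (Fin p))
    (hdisj : ∀ g g', g ≠ g' → Disjoint (F g) (F g'))
    (hcover : ∀ i, ∃ g, i ∈ F g)
    (Q : EuclideanSpace ℝ (Fin p) → ℝ)
    (gradQ : EuclideanSpace ℝ (Fin p) → EuclideanSpace ℝ (Fin p))
    (hgrad : ∀ w, HasGradientAt Q (gradQ w) w)
    (s : ℕ) (φm ε : ℝ) (hφ : 0 < φm) (hε : 0 ≤ ε)
    (hsc : ∀ w u : EuclideanSpace ℝ (Fin p), gsupp F u ≤ s →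
      Q (w + u) - Q w - (inner ℝ (gradQ w) u : ℝ) ≥ φm / 2 * ‖u‖ ^ 2)
    (wstar w : EuclideanSpace ℝ (Fin p)) (S : Finset (Fin m))
    (hS : S.card ≤ s)
    (hsupp : ∀ g ∉ S, ∀ i ∈ F g, (w - wstar) i = 0)
    (hgradbd : ∀ g : Fin m, ‖restr (F g) (gradQ w)‖ ≤ ε)
    (hQ : Q wstar ≤ Q w) :
    ‖w - wstar‖ ≤ 2 * ε / φm * Real.sqrt S.card :=
  stmt6_general F hdisj hcover Q gradQ s φm ε hφ hε hsc wstar w S hS hsupp hgradbd hQ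
end

section
/- Let Q : ℝ^p → ℝ be differentiable, satisfying restricted strong convexity with parameter φ₋ at scale s and restricted smoothness with parameter φ₊ at single-group scale. Let ŵ minimize Q over vectors supported on group set Ĝ, and let w' be any vector supported on group set G' with |G' ∪ Ĝ| ≤ s. If g* ∈ G' \ Ĝ attains (up to factor λ ∈ (0,1]) the maximal one-group decrease, i.e., Q(ŵ) − min_{α supported on g*} Q(ŵ + α) ≥ λ·max_{g ∈ G'\Ĝ} [Q(ŵ) − min_{α supported on g} Q(ŵ+α)], then Q(ŵ) − Q(w') ≤ (φ₊ · |G' \ Ĝ| / (λ·φ₋)) · (Q(ŵ) − min_{α supported on g*} Q(ŵ + α)). -/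
/-- The best one-group decrease of `Q` from `w` along directions supported on `Fg`:
`Q(w) − min_{supp(α) ⊆ Fg} Q(w + α)`. -/
noncomputable def oneStepGain {p : ℕ} (Q : EuclideanSpace ℝ (Fin p) → ℝ)
    (Fg : Finset (Fin p)) (w : EuclideanSpace ℝ (Fin p)) : ℝ :=
  Q w - sInf ((fun α => Q (w + α)) '' {α | ∀ i ∉ Fg, α i = 0})


/-!
Write `Δ = w' - ŵ` and `c = ∇Q(ŵ)`. As `ŵ` minimizes `Q` on the vectors supported on the groups
of `Ĝ`, `c` is orthogonal to them, so `⟪c, Δ⟫` is the sum of `⟪c, Δ_g⟫` over the restrictions `Δ_g`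
of `Δ` to the new groups `g ∈ G' \ Ĝ`. Strong convexity along `Δ` gives
`Q(ŵ) - Q(w') ≤ -⟪c, Δ⟫ - φ₋/2 ‖Δ‖² ≤ ∑_g (-⟪c, Δ_g⟫ - φ₋/2 ‖Δ_g‖²)`, and smoothness along the
step `(φ₋/φ₊) Δ_g` bounds each summand by `φ₊/φ₋` times the gain of `g`, which is at most
`gain(g*)/λ`.
-/

open Finset Function InnerProductSpace RealInnerProductSpace

section InnerProductSpace

variable {E : Type*} [NormedAddCommGroup E] [InnerProductSpace ℝ E]

theorem bddBelow_image_of_quadratic_minorant {f : E → ℝ} {T : Set E} {a μ : ℝ} {c : E}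
    (hμ : 0 < μ) (h : ∀ x ∈ T, a + ⟪c, x⟫ + μ / 2 * ‖x‖ ^ 2 ≤ f x) : BddBelow (f '' T) := by
  refine ⟨a - ‖c‖ ^ 2 / (2 * μ), ?_⟩
  rintro _ ⟨x, hx, rfl⟩
  have hcx : -(‖c‖ * ‖x‖) ≤ ⟪c, x⟫ := neg_le_of_abs_le (abs_real_inner_le_norm c x)
  have key : 0 ≤ (μ * ‖x‖ - ‖c‖) ^ 2 / (2 * μ) := by positivity
  have expand : (μ * ‖x‖ - ‖c‖) ^ 2 / (2 * μ) = μ / 2 * ‖x‖ ^ 2 - ‖c‖ * ‖x‖ + ‖c‖ ^ 2 / (2 * μ) := by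
    field_simp; ring
  linarith [h x hx]

/-- Taking the step `t = φm / φp` in the smoothness bound. -/
theorem neg_inner_sub_le_of_smooth {Q : E → ℝ} {w c u : E} {φm φp G : ℝ}
    (hφm : 0 < φm) (hφp : 0 < φp)
    (hsm : ∀ t : ℝ, Q (w + t • u) - Q w - ⟪c, t • u⟫ ≤ φp / 2 * ‖t • u‖ ^ 2)
    (hgain : ∀ t : ℝ, Q w - Q (w + t • u) ≤ G) :
    -⟪c, u⟫ - φm / 2 * ‖u‖ ^ 2 ≤ φp / φm * G := by
  have h1 := hsm (φm / φp)
  have h2 := hgain (φm / φp)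
  rw [inner_smul_right, norm_smul, mul_pow, Real.norm_eq_abs, sq_abs] at h1
  have step : φm / φp * (-⟪c, u⟫ - φm / 2 * ‖u‖ ^ 2) =
      -(φm / φp * ⟪c, u⟫) - φp / 2 * ((φm / φp) ^ 2 * ‖u‖ ^ 2) := by
    field_simp
  calc -⟪c, u⟫ - φm / 2 * ‖u‖ ^ 2
      = φp / φm * (φm / φp * (-⟪c, u⟫ - φm / 2 * ‖u‖ ^ 2)) := by field_simp
    _ ≤ φp / φm * G := by gcongr; linarith

theorem HasGradientAt.inner_eq_zero_of_isMinOn [CompleteSpace E] {Q : E → ℝ} {g w v : E}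
    {K : Submodule ℝ E} (hQ : HasGradientAt Q g w) (hw : w ∈ K) (hmin : IsMinOn Q K w)
    (hv : v ∈ K) : ⟪g, v⟫ = 0 := by
  have hline : HasDerivAt (fun t : ℝ => Q (t • v + w)) ⟪g, v⟫ 0 := by
    have hQ' : HasFDerivAt Q (toDual ℝ E g) ((0 : ℝ) • v + w) := by
      simpa using hQ.hasFDerivAt
    have := hQ'.comp_hasDerivAt (0 : ℝ) (((hasDerivAt_id (0 : ℝ)).smul_const v).add_const w)
    rwa [one_smul, toDual_apply_apply] at this
  refine IsLocalMin.hasDerivAt_eq_zero (Filter.Eventually.of_forall fun t => ?_) hline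
  simpa using hmin (K.add_mem (K.smul_mem t hv) hw)

end InnerProductSpace

section Coordinates

variable {p : ℕ}

def supportedOn (A : Finset (Fin p)) : Submodule ℝ (EuclideanSpace ℝ (Fin p)) where
  carrier := {v | ∀ i ∉ A, v i = 0}
  add_mem' hu hv i hi := by simp [hu i hi, hv i hi]
  zero_mem' _ _ := rfl
  smul_mem' t _ hv i hi := by simp [hv i hi]

theorem mem_supportedOn {A : Finset (Fin p)} {v : EuclideanSpace ℝ (Fin p)} :
    v ∈ supportedOn A ↔ ∀ i ∉ A, v i = 0 :=
  Iff.rfl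

theorem supportedOn_mono {A B : Finset (Fin p)} (h : A ⊆ B) : supportedOn A ≤ supportedOn B :=
  fun _ hv i hi => hv i fun hiA => hi (h hiA)

theorem mem_supportedOn_biUnion {m : ℕ} {F : Fin m → Finset (Fin p)} {G : Finset (Fin m)}
    {v : EuclideanSpace ℝ (Fin p)} :
    v ∈ supportedOn (G.biUnion F) ↔ ∀ i, (∀ g ∈ G, i ∉ F g) → v i = 0 := by
  simp [mem_supportedOn]

def restrictCoords (A : Finset (Fin p)) (v : EuclideanSpace ℝ (Fin p)) :
    EuclideanSpace ℝ (Fin p) :=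
  WithLp.toLp 2 fun i => if i ∈ A then v i else 0

@[simp]
theorem restrictCoords_apply (A : Finset (Fin p)) (v : EuclideanSpace ℝ (Fin p)) (i : Fin p) :
    restrictCoords A v i = if i ∈ A then v i else 0 :=
  rfl

theorem restrictCoords_mem_supportedOn (A : Finset (Fin p)) (v : EuclideanSpace ℝ (Fin p)) :
    restrictCoords A v ∈ supportedOn A := fun i hi => by simp [hi]

theorem norm_restrictCoords_sq (A : Finset (Fin p)) (v : EuclideanSpace ℝ (Fin p)) :
    ‖restrictCoords A v‖ ^ 2 = ∑ i ∈ A, v i ^ 2 := by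
  simp [EuclideanSpace.norm_sq_eq, sum_ite_mem, sq_abs]

theorem sub_restrictCoords_mem_supportedOn {A B : Finset (Fin p)} {v : EuclideanSpace ℝ (Fin p)}
    (hv : v ∈ supportedOn (A ∪ B)) : v - restrictCoords B v ∈ supportedOn A := by
  intro i hiA
  by_cases hiB : i ∈ B
  · simp [hiB]
  · simp [hiB, hv i (by simp [hiA, hiB])]

variable {m : ℕ} {F : Fin m → Finset (Fin p)}

theorem sum_restrictCoords_of_pairwiseDisjoint {S : Finset (Fin m)}
    (hF : (S : Set (Fin m)).PairwiseDisjoint F) (v : EuclideanSpace ℝ (Fin p)) :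
    ∑ g ∈ S, restrictCoords (F g) v = restrictCoords (S.biUnion F) v := by
  ext i
  rw [WithLp.ofLp_sum, Finset.sum_apply]
  simp only [restrictCoords_apply]
  split_ifs with hi
  · obtain ⟨g₀, hg₀, hig₀⟩ := mem_biUnion.mp hi
    rw [sum_eq_single_of_mem g₀ hg₀ fun g hg hne => if_neg fun hig =>
      disjoint_left.mp (hF hg hg₀ hne) hig hig₀, if_pos hig₀]
  · exact sum_eq_zero fun g hg => if_neg fun hig => hi (mem_biUnion.mpr ⟨g, hg, hig⟩)

theorem sum_norm_restrictCoords_sq_le {S : Finset (Fin m)}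
    (hF : (S : Set (Fin m)).PairwiseDisjoint F) (v : EuclideanSpace ℝ (Fin p)) :
    ∑ g ∈ S, ‖restrictCoords (F g) v‖ ^ 2 ≤ ‖v‖ ^ 2 := by
  simp_rw [norm_restrictCoords_sq, ← sum_biUnion hF, EuclideanSpace.norm_sq_eq,
    Real.norm_eq_abs, sq_abs]
  exact sum_le_univ_sum_of_nonneg fun i => sq_nonneg _

theorem gsupp_le_card_s9 (hF : Pairwise (Disjoint on F)) {G : Finset (Fin m)}
    {u : EuclideanSpace ℝ (Fin p)} (hu : u ∈ supportedOn (G.biUnion F)) :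
    gsupp F u ≤ G.card := by
  rw [← Set.ncard_coe_finset G]
  refine Set.ncard_le_ncard (fun g ⟨i, hig, hui⟩ => ?_)
  obtain ⟨g', hg', hig'⟩ := mem_biUnion.mp (not_not.mp fun hi => hui (hu i hi))
  rwa [hF.eq (not_disjoint_iff.mpr ⟨i, hig, hig'⟩)]

/-- Strong convexity keeps the infimum in `oneStepGain` away from the junk value `sInf` takes on
sets that are not bounded below. -/
theorem sub_le_oneStepGain {Q : EuclideanSpace ℝ (Fin p) → ℝ} {A : Finset (Fin p)}
    {w c α : EuclideanSpace ℝ (Fin p)} {μ : ℝ} (hμ : 0 < μ)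
    (hsc : ∀ α ∈ supportedOn A, μ / 2 * ‖α‖ ^ 2 ≤ Q (w + α) - Q w - ⟪c, α⟫)
    (hα : α ∈ supportedOn A) : Q w - Q (w + α) ≤ oneStepGain Q A w := by
  have hbdd : BddBelow ((fun α => Q (w + α)) '' (supportedOn A : Set _)) :=
    bddBelow_image_of_quadratic_minorant (a := Q w) (c := c) hμ fun x hx => by
      linarith [hsc x hx]
  exact sub_le_sub_left (csInf_le hbdd ⟨α, hα, rfl⟩) _

end Coordinates

theorem stmt9_general {p m : ℕ} (F : Fin m → Finset (Fin p))
    (hdisj : ∀ g g', g ≠ g' → Disjoint (F g) (F g'))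
    (Q : EuclideanSpace ℝ (Fin p) → ℝ)
    (gradQ : EuclideanSpace ℝ (Fin p) → EuclideanSpace ℝ (Fin p))
    (hgrad : ∀ w, HasGradientAt Q (gradQ w) w)
    (s : ℕ) (φm φp lam : ℝ) (hφm : 0 < φm) (hφp : 0 < φp)
    (hlam0 : 0 < lam)
    (hsc : ∀ w u : EuclideanSpace ℝ (Fin p), gsupp F u ≤ s →
      Q (w + u) - Q w - (inner ℝ (gradQ w) u : ℝ) ≥ φm / 2 * ‖u‖ ^ 2)
    (hsm : ∀ (g : Fin m) (w u : EuclideanSpace ℝ (Fin p)), (∀ i ∉ F g, u i = 0) →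
      Q (w + u) - Q w - (inner ℝ (gradQ w) u : ℝ) ≤ φp / 2 * ‖u‖ ^ 2)
    (Ghat G' : Finset (Fin m))
    (what : EuclideanSpace ℝ (Fin p))
    (hsupp : ∀ i : Fin p, (∀ g ∈ Ghat, i ∉ F g) → what i = 0)
    (hmin : ∀ u : EuclideanSpace ℝ (Fin p),
      (∀ i : Fin p, (∀ g ∈ Ghat, i ∉ F g) → u i = 0) → Q what ≤ Q u)
    (w' : EuclideanSpace ℝ (Fin p))
    (hsupp' : ∀ i : Fin p, (∀ g ∈ G', i ∉ F g) → w' i = 0)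
    (hcard : (G' ∪ Ghat).card ≤ s)
    (gstar : Fin m) (hgstar : gstar ∈ G' \ Ghat)
    (hsel : ∀ g ∈ G' \ Ghat,
      oneStepGain Q (F gstar) what ≥ lam * oneStepGain Q (F g) what) :
    Q what - Q w' ≤
      φp * (G' \ Ghat).card / (lam * φm) * oneStepGain Q (F gstar) what := by
  classical
  set S := G' \ Ghat
  set c := gradQ what
  set Δ := w' - what
  have hF : Pairwise (Disjoint on F) := hdisj
  have hwhat : what ∈ supportedOn (Ghat.biUnion F) := mem_supportedOn_biUnion.mpr hsupp
  have hΔ : Δ ∈ supportedOn ((G' ∪ Ghat).biUnion F) :=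
    sub_mem (supportedOn_mono (biUnion_subset_biUnion_of_subset_left F subset_union_left)
        (mem_supportedOn_biUnion.mpr hsupp'))
      (supportedOn_mono (biUnion_subset_biUnion_of_subset_left F subset_union_right) hwhat)
  have hsc_group (g : Fin m) :
      ∀ α ∈ supportedOn (F g), φm / 2 * ‖α‖ ^ 2 ≤ Q (what + α) - Q what - ⟪c, α⟫ := by
    intro α hα
    refine hsc what α ((gsupp_le_card_s9 hF (G := {g}) (by simpa using hα)).trans ?_)
    exact card_le_card (singleton_subset_iff.mpr (mem_union_left _ (mem_sdiff.mp hgstar).1)) |>.trans hcard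
  have horth : ∀ v ∈ supportedOn (Ghat.biUnion F), ⟪c, v⟫ = 0 := fun v hv =>
    (hgrad what).inner_eq_zero_of_isMinOn hwhat
      (fun u hu => hmin u (mem_supportedOn_biUnion.mp hu)) hv
  have hgroup : ∀ g ∈ S, -⟪c, restrictCoords (F g) Δ⟫ - φm / 2 * ‖restrictCoords (F g) Δ‖ ^ 2 ≤
      φp / φm * (oneStepGain Q (F gstar) what / lam) := by
    intro g hg
    have hu := restrictCoords_mem_supportedOn (F g) Δ
    calc _ ≤ φp / φm * oneStepGain Q (F g) what :=
          neg_inner_sub_le_of_smooth hφm hφp (fun t => hsm g what _ (Submodule.smul_mem _ t hu))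
            (fun t => sub_le_oneStepGain hφm (hsc_group g) (Submodule.smul_mem _ t hu))
      _ ≤ _ := by
          gcongr
          rw [le_div_iff₀ hlam0]
          linarith [hsel g hg]
  have hinner : ⟪c, Δ⟫ = ∑ g ∈ S, ⟪c, restrictCoords (F g) Δ⟫ := by
    rw [← inner_sum, sum_restrictCoords_of_pairwiseDisjoint (hF.set_pairwise _) Δ]
    have hΔ' : Δ ∈ supportedOn (Ghat.biUnion F ∪ S.biUnion F) := by
      rwa [← union_biUnion, union_sdiff_self_eq_union, union_comm]
    have := horth _ (sub_restrictCoords_mem_supportedOn hΔ')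
    rwa [inner_sub_right, sub_eq_zero] at this
  have hnorm := sum_norm_restrictCoords_sq_le (hF.set_pairwise S) Δ
  have hconv : φm / 2 * ‖Δ‖ ^ 2 ≤ Q w' - Q what - ⟪c, Δ⟫ := by
    simpa [Δ] using hsc what Δ ((gsupp_le_card_s9 hF hΔ).trans hcard)
  calc Q what - Q w' ≤ -⟪c, Δ⟫ - φm / 2 * ‖Δ‖ ^ 2 := by linarith
    _ ≤ ∑ g ∈ S, (-⟪c, restrictCoords (F g) Δ⟫ - φm / 2 * ‖restrictCoords (F g) Δ‖ ^ 2) := by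
      rw [sum_sub_distrib, sum_neg_distrib, ← mul_sum, hinner]
      gcongr
    _ ≤ S.card • (φp / φm * (oneStepGain Q (F gstar) what / lam)) := sum_le_card_nsmul _ _ _ hgroup
    _ = _ := by
      rw [nsmul_eq_mul]
      field_simp

/-- Lemma `forward_process_obj`: a `λ`-approximate greedy forward step makes
progress `Q(ŵ) − Q(w') ≤ (φ₊·|G'\Ĝ| / (λ·φ₋)) · gain(g*)` relative to any
competitor `w'` supported on `G'`. -/
theorem stmt9 {p m : ℕ} (F : Fin m → Finset (Fin p))
    (hdisj : ∀ g g', g ≠ g' → Disjoint (F g) (F g'))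
    (hcover : ∀ i, ∃ g, i ∈ F g)
    (Q : EuclideanSpace ℝ (Fin p) → ℝ)
    (gradQ : EuclideanSpace ℝ (Fin p) → EuclideanSpace ℝ (Fin p))
    (hgrad : ∀ w, HasGradientAt Q (gradQ w) w)
    (s : ℕ) (φm φp lam : ℝ) (hφm : 0 < φm) (hφp : 0 < φp)
    (hlam0 : 0 < lam) (hlam1 : lam ≤ 1)
    (hsc : ∀ w u : EuclideanSpace ℝ (Fin p), gsupp F u ≤ s →
      Q (w + u) - Q w - (inner ℝ (gradQ w) u : ℝ) ≥ φm / 2 * ‖u‖ ^ 2)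
    (hsm : ∀ (g : Fin m) (w u : EuclideanSpace ℝ (Fin p)), (∀ i ∉ F g, u i = 0) →
      Q (w + u) - Q w - (inner ℝ (gradQ w) u : ℝ) ≤ φp / 2 * ‖u‖ ^ 2)
    (Ghat G' : Finset (Fin m))
    (what : EuclideanSpace ℝ (Fin p))
    (hsupp : ∀ i : Fin p, (∀ g ∈ Ghat, i ∉ F g) → what i = 0)
    (hmin : ∀ u : EuclideanSpace ℝ (Fin p),
      (∀ i : Fin p, (∀ g ∈ Ghat, i ∉ F g) → u i = 0) → Q what ≤ Q u)
    (w' : EuclideanSpace ℝ (Fin p))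
    (hsupp' : ∀ i : Fin p, (∀ g ∈ G', i ∉ F g) → w' i = 0)
    (hcard : (G' ∪ Ghat).card ≤ s)
    (gstar : Fin m) (hgstar : gstar ∈ G' \ Ghat)
    (hsel : ∀ g ∈ G' \ Ghat,
      oneStepGain Q (F gstar) what ≥ lam * oneStepGain Q (F g) what) :
    Q what - Q w' ≤
      φp * (G' \ Ghat).card / (lam * φm) * oneStepGain Q (F gstar) what :=
  stmt9_general F hdisj Q gradQ hgrad s φm φp lam hφm hφp hlam0 hsc hsm Ghat G' what hsupp hmin w'
    hsupp' hcard gstar hgstar hsel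
end

section
/- Let Q be twice differentiable with Q(w) = (1/n)Σ_{i=1}^n f_i(xᵢᵀw), where each f_i : ℝ → ℝ is twice differentiable with l ≤ f_i''(z) ≤ L for all z in the relevant domain (0 < l ≤ L). Then for any index set F ⊆ {1,…,p}, the restricted curvature constants satisfy l·λ_min((1/n)Σ xᵢ_F xᵢ_Fᵀ) ≤ ρ₋(F) and ρ₊(F) ≤ L·λ_max((1/n)Σ xᵢ_F xᵢ_Fᵀ), where ρ₋(F) (resp. ρ₊(F)) is the infimum (resp. supremum) over u supported on F and w of [Q(w+u) − Q(w) − ⟨∇Q(w), u⟩] / ((1/2)‖u‖²), and xᵢ_F denotes the subvector of xᵢ on F. -/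
/-!
Along the line `t ↦ w + t • u` the summand `f i ⟪x i, w + t • u⟫` has second derivative
`f i'' · ⟪x i, u⟫²`, which lies between `l ⟪x i, u⟫²` and `L ⟪x i, u⟫²`; Taylor's theorem therefore
sandwiches the remainder `Q (w + u) - Q w - ⟪∇Q w, u⟫` between `l / 2` and `L / 2` times
`(1/n) ∑ ⟪x i, u⟫²`. When `u` is supported on `F`, this quadratic form is `v ⬝ᵥ M *ᵥ v` for the
restriction `v` of `u` to `F`, and expanding `v` in an eigenbasis of `M` bounds it between
`λ_min ‖u‖²` and `λ_max ‖u‖²`.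
-/

open Finset Matrix
open scoped RealInnerProductSpace

theorem apply_zero_add_deriv_add_half_le_apply_one {g g' g'' : ℝ → ℝ} {c : ℝ}
    (hg : ∀ t, HasDerivAt g (g' t) t) (hg' : ∀ t, HasDerivAt g' (g'' t) t)
    (hc : ∀ t, c ≤ g'' t) : g 0 + g' 0 + c / 2 ≤ g 1 := by
  have hh : ∀ t, HasDerivAt (fun t => g t - c / 2 * t ^ 2) (g' t - c * t) t := fun t => by
    refine ((hg t).fun_sub ((hasDerivAt_pow 2 t).const_mul (c / 2))).congr_deriv ?_
    push_cast; ring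
  have hh' : ∀ t, HasDerivAt (fun t => g' t - c * t) (g'' t - c) t := fun t => by
    refine ((hg' t).fun_sub ((hasDerivAt_id t).const_mul c)).congr_deriv ?_
    ring
  have hmono : Monotone fun t => g' t - c * t :=
    monotone_of_hasDerivAt_nonneg hh' fun t => sub_nonneg.2 (hc t)
  obtain ⟨ξ, hξ, hslope⟩ := exists_hasDerivAt_eq_slope _ _ zero_lt_one
    (fun t _ => (hh t).continuousAt.continuousWithinAt) fun t _ => hh t
  have := hmono hξ.1.le
  norm_num at this hslope
  linarith

theorem ContDiff.half_mul_sq_le_sub_sub_deriv_mul {f : ℝ → ℝ} (hf : ContDiff ℝ 2 f) {l : ℝ}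
    (hl : ∀ z, l ≤ deriv (deriv f) z) (a b : ℝ) :
    l / 2 * b ^ 2 ≤ f (a + b) - f a - deriv f a * b := by
  have hf' : Differentiable ℝ (deriv f) := (hf.iterate_deriv' 1 1).differentiable one_ne_zero
  have hline : ∀ t, HasDerivAt (fun t => a + t * b) b t := fun t => by
    simpa using ((hasDerivAt_id t).mul_const b).const_add a
  have := apply_zero_add_deriv_add_half_le_apply_one (g := fun t => f (a + t * b))
    (g' := fun t => deriv f (a + t * b) * b) (g'' := fun t => deriv (deriv f) (a + t * b) * b ^ 2)
    (c := l * b ^ 2)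
    (fun t => ((hf.differentiable two_ne_zero _).hasDerivAt.comp t (hline t)))
    (fun t => by simpa [sq, mul_assoc] using ((hf' _).hasDerivAt.comp t (hline t)).mul_const b)
    (fun t => mul_le_mul_of_nonneg_right (hl _) (sq_nonneg b))
  simp only [zero_mul, add_zero, one_mul] at this
  linarith

theorem ContDiff.sub_sub_deriv_mul_le_half_mul_sq {f : ℝ → ℝ} (hf : ContDiff ℝ 2 f) {L : ℝ}
    (hL : ∀ z, deriv (deriv f) z ≤ L) (a b : ℝ) :
    f (a + b) - f a - deriv f a * b ≤ L / 2 * b ^ 2 := by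
  have := hf.neg.half_mul_sq_le_sub_sub_deriv_mul (l := -L)
    (fun z => by simpa only [deriv.fun_neg', neg_le_neg_iff] using hL z) a b
  simp only [deriv.fun_neg'] at this
  linarith

section Separable

variable {E : Type*} [NormedAddCommGroup E] [InnerProductSpace ℝ E] [CompleteSpace E] {n : ℕ}
  {x : Fin n → E} {f : Fin n → ℝ → ℝ} {Q : E → ℝ} {g w : E}

theorem inner_gradient_eq_of_separable (hf : ∀ i, Differentiable ℝ (f i))
    (hQ : ∀ w, Q w = (1 / n : ℝ) * ∑ i, f i ⟪x i, w⟫) (hg : HasGradientAt Q g w) (u : E) :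
    ⟪g, u⟫ = (1 / n : ℝ) * ∑ i, deriv (f i) ⟪x i, w⟫ * ⟪x i, u⟫ := by
  have hline : HasDerivAt (fun t : ℝ => Q (w + t • u)) ⟪g, u⟫ 0 :=
    (hg.hasFDerivAt.comp_hasDerivAt_of_eq (0 : ℝ)
      (((hasDerivAt_id (0 : ℝ)).smul_const u).const_add w) (by simp)).congr_deriv (by simp)
  refine hline.unique ?_
  simp only [hQ, inner_add_right, inner_smul_right]
  refine HasDerivAt.const_mul _ (HasDerivAt.fun_sum fun i _ => ?_)
  exact ((hf i _).hasDerivAt.comp (0 : ℝ)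
    (((hasDerivAt_id (0 : ℝ)).mul_const ⟪x i, u⟫).const_add ⟪x i, w⟫)).congr_deriv (by simp)

theorem bregman_mem_Icc_of_separable (hf : ∀ i, ContDiff ℝ 2 (f i)) {l L : ℝ}
    (hcurv : ∀ i z, l ≤ deriv (deriv (f i)) z ∧ deriv (deriv (f i)) z ≤ L)
    (hQ : ∀ w, Q w = (1 / n : ℝ) * ∑ i, f i ⟪x i, w⟫) (hg : HasGradientAt Q g w) (u : E) :
    l / 2 * ((1 / n : ℝ) * ∑ i, ⟪x i, u⟫ ^ 2) ≤ Q (w + u) - Q w - ⟪g, u⟫ ∧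
      Q (w + u) - Q w - ⟪g, u⟫ ≤ L / 2 * ((1 / n : ℝ) * ∑ i, ⟪x i, u⟫ ^ 2) := by
  have hsplit : Q (w + u) - Q w - ⟪g, u⟫ = (1 / n : ℝ) * ∑ i,
      (f i (⟪x i, w⟫ + ⟪x i, u⟫) - f i ⟪x i, w⟫ - deriv (f i) ⟪x i, w⟫ * ⟪x i, u⟫) := by
    rw [inner_gradient_eq_of_separable (fun i => (hf i).differentiable two_ne_zero) hQ hg,
      hQ, hQ, sum_sub_distrib, sum_sub_distrib]
    simp only [inner_add_right]
    ring
  rw [hsplit, mul_left_comm, mul_left_comm (L / 2)]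
  constructor <;> gcongr <;> rw [mul_sum] <;> gcongr with i
  · exact (hf i).half_mul_sq_le_sub_sub_deriv_mul (fun z => (hcurv i z).1) _ _
  · exact (hf i).sub_sub_deriv_mul_le_half_mul_sq (fun z => (hcurv i z).2) _ _

end Separable

namespace Matrix.IsHermitian

variable {m : Type*} [Fintype m] [DecidableEq m] {A : Matrix m m ℝ} (hA : A.IsHermitian)

theorem dotProduct_mulVec_eq_sum_eigenvalues (v : m → ℝ) :
    v ⬝ᵥ (A *ᵥ v) = ∑ j, hA.eigenvalues j * ⟪hA.eigenvectorBasis j, WithLp.toLp 2 v⟫ ^ 2 := by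
  set b := hA.eigenvectorBasis
  have heigen : ∀ j, A *ᵥ ⇑(b j) = hA.eigenvalues j • ⇑(b j) := hA.mulVec_eigenvectorBasis
  have hcoord : ∀ j, v ⬝ᵥ ⇑(b j) = ⟪b j, WithLp.toLp 2 v⟫ := fun j => by
    simp [EuclideanSpace.inner_eq_star_dotProduct]
  have hexpand : v = ∑ j, ⟪b j, WithLp.toLp 2 v⟫ • ⇑(b j) := by
    simpa using congrArg WithLp.ofLp (b.sum_repr' (WithLp.toLp 2 v)).symm
  nth_rw 2 [hexpand]
  simp only [mulVec_sum, mulVec_smul, heigen, dotProduct_sum,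
    dotProduct_smul, hcoord, smul_eq_mul]
  exact sum_congr rfl fun j _ => by ring

theorem dotProduct_self_eq_sum_inner_eigenvectorBasis_sq (v : m → ℝ) :
    v ⬝ᵥ v = ∑ j, ⟪hA.eigenvectorBasis j, WithLp.toLp 2 v⟫ ^ 2 := by
  rw [hA.eigenvectorBasis.sum_sq_inner_right, EuclideanSpace.real_norm_sq_eq]
  simp [dotProduct, sq]

theorem inf'_eigenvalues_mul_dotProduct_le (h : (univ : Finset m).Nonempty) (v : m → ℝ) :
    univ.inf' h hA.eigenvalues * (v ⬝ᵥ v) ≤ v ⬝ᵥ (A *ᵥ v) := by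
  rw [hA.dotProduct_mulVec_eq_sum_eigenvalues, hA.dotProduct_self_eq_sum_inner_eigenvectorBasis_sq,
    mul_sum]
  gcongr with j
  exact inf'_le _ (mem_univ j)

theorem dotProduct_mulVec_le_sup'_eigenvalues_mul (h : (univ : Finset m).Nonempty) (v : m → ℝ) :
    v ⬝ᵥ (A *ᵥ v) ≤ univ.sup' h hA.eigenvalues * (v ⬝ᵥ v) := by
  rw [hA.dotProduct_mulVec_eq_sum_eigenvalues, hA.dotProduct_self_eq_sum_inner_eigenvectorBasis_sq,
    mul_sum]
  gcongr with j
  exact le_sup' _ (mem_univ j)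

end Matrix.IsHermitian

theorem exists_ne_zero_supported_on {ι : Type*} {F : Finset ι} (hF : F.Nonempty) :
    ∃ u : EuclideanSpace ℝ ι, (∀ j ∉ F, u j = 0) ∧ u ≠ 0 := by
  classical
  obtain ⟨a, ha⟩ := hF
  refine ⟨EuclideanSpace.single a 1, fun j hj => ?_, ?_⟩
  · rw [PiLp.single_apply, if_neg (ne_of_mem_of_not_mem ha hj).symm]
  · simp

section RestrictedSupport

variable {ι : Type*} [Fintype ι] {F : Finset ι} {u : EuclideanSpace ℝ ι}

theorem inner_eq_sum_subtype_of_support_subset (hu : ∀ j ∉ F, u j = 0)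
    (y : EuclideanSpace ℝ ι) : ⟪y, u⟫ = ∑ a : F, y a * u a := by
  rw [sum_coe_sort F fun j => y j * u j, sum_subset (subset_univ F) fun j _ hj => by simp [hu j hj]]
  simp [EuclideanSpace.inner_eq_star_dotProduct, dotProduct, mul_comm]

theorem norm_sq_eq_dotProduct_of_support_subset (hu : ∀ j ∉ F, u j = 0) :
    ‖u‖ ^ 2 = (fun a : F => u a) ⬝ᵥ (fun a : F => u a) := by
  rw [← real_inner_self_eq_norm_sq, inner_eq_sum_subtype_of_support_subset hu]
  rfl

theorem mul_sum_inner_sq_eq_dotProduct_mulVec {n : ℕ} (x : Fin n → EuclideanSpace ℝ ι) (c : ℝ)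
    {M : Matrix F F ℝ} (hM : ∀ a b : F, M a b = c * ∑ i, x i a * x i b)
    (hu : ∀ j ∉ F, u j = 0) :
    c * ∑ i, ⟪x i, u⟫ ^ 2 = (fun a : F => u a) ⬝ᵥ (M *ᵥ fun a : F => u a) := by
  simp only [inner_eq_sum_subtype_of_support_subset hu, sq, dotProduct,
    mulVec, hM, mul_sum, sum_mul]
  rw [sum_comm]
  refine sum_congr rfl fun a _ => ?_
  rw [sum_comm]
  exact sum_congr rfl fun b _ => sum_congr rfl fun i _ => by ring

end RestrictedSupport

theorem stmt14_general {p n : ℕ}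
    (x : Fin n → EuclideanSpace ℝ (Fin p)) (f : Fin n → ℝ → ℝ)
    (hf : ∀ i, ContDiff ℝ 2 (f i)) (l L : ℝ) (hl : 0 < l) (hlL : l ≤ L)
    (hcurv : ∀ i z, l ≤ deriv (deriv (f i)) z ∧ deriv (deriv (f i)) z ≤ L)
    (Q : EuclideanSpace ℝ (Fin p) → ℝ)
    (hQ : ∀ w, Q w = (1 / n : ℝ) * ∑ i, f i (inner ℝ (x i) w : ℝ))
    (gradQ : EuclideanSpace ℝ (Fin p) → EuclideanSpace ℝ (Fin p))
    (hgrad : ∀ w, HasGradientAt Q (gradQ w) w)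
    (F : Finset (Fin p)) (hF : (Finset.univ : Finset F).Nonempty)
    (M : Matrix F F ℝ)
    (hM : ∀ a b : F, M a b = (1 / n : ℝ) * ∑ i, x i a * x i b)
    (hHerm : M.IsHermitian)
    (ρminus ρplus : ℝ)
    (hρm : ρminus = sInf {r | ∃ w u : EuclideanSpace ℝ (Fin p),
      (∀ i ∉ F, u i = 0) ∧ u ≠ 0 ∧
      r = (Q (w + u) - Q w - (inner ℝ (gradQ w) u : ℝ)) / (1 / 2 * ‖u‖ ^ 2)})
    (hρp : ρplus = sSup {r | ∃ w u : EuclideanSpace ℝ (Fin p),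
      (∀ i ∉ F, u i = 0) ∧ u ≠ 0 ∧
      r = (Q (w + u) - Q w - (inner ℝ (gradQ w) u : ℝ)) / (1 / 2 * ‖u‖ ^ 2)}) :
    l * Finset.univ.inf' hF hHerm.eigenvalues ≤ ρminus ∧
      ρplus ≤ L * Finset.univ.sup' hF hHerm.eigenvalues := by
  set R := {r | ∃ w u : EuclideanSpace ℝ (Fin p),
      (∀ i ∉ F, u i = 0) ∧ u ≠ 0 ∧
      r = (Q (w + u) - Q w - (inner ℝ (gradQ w) u : ℝ)) / (1 / 2 * ‖u‖ ^ 2)}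
  have hbound : ∀ r ∈ R, l * univ.inf' hF hHerm.eigenvalues ≤ r ∧
      r ≤ L * univ.sup' hF hHerm.eigenvalues := by
    rintro r ⟨w, u, hu, hu0, rfl⟩
    obtain ⟨hlo, hhi⟩ := bregman_mem_Icc_of_separable hf hcurv hQ (hgrad w) u
    rw [mul_sum_inner_sq_eq_dotProduct_mulVec x _ hM hu] at hlo hhi
    have hmin := hHerm.inf'_eigenvalues_mul_dotProduct_le hF fun a : F => u a
    have hmax := hHerm.dotProduct_mulVec_le_sup'_eigenvalues_mul hF fun a : F => u a
    rw [← norm_sq_eq_dotProduct_of_support_subset hu] at hmin hmax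
    have hpos : 0 < 1 / 2 * ‖u‖ ^ 2 := by have := norm_pos_iff.2 hu0; positivity
    rw [le_div_iff₀ hpos, div_le_iff₀ hpos]
    constructor
    · linarith [mul_le_mul_of_nonneg_left hmin hl.le]
    · linarith [mul_le_mul_of_nonneg_left hmax (hl.le.trans hlL)]
  obtain ⟨u, hu, hu0⟩ := exists_ne_zero_supported_on (F := F) (by simpa using hF)
  have hne : R.Nonempty := ⟨_, 0, u, hu, hu0, rfl⟩
  exact ⟨hρm ▸ le_csInf hne fun r hr => (hbound r hr).1,
    hρp ▸ csSup_le hne fun r hr => (hbound r hr).2⟩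

/-- Restricted curvature of a separable M-estimation criterion
`Q(w) = (1/n) Σ f_i(xᵢᵀw)` is controlled by the restricted eigenvalues of the
empirical Gram matrix, up to the curvature bounds `l ≤ f_i'' ≤ L`:
`l·λ_min(M) ≤ ρ₋(F)` and `ρ₊(F) ≤ L·λ_max(M)`. -/
theorem stmt14 {p n : ℕ} (hn : 0 < n)
    (x : Fin n → EuclideanSpace ℝ (Fin p)) (f : Fin n → ℝ → ℝ)
    (hf : ∀ i, ContDiff ℝ 2 (f i)) (l L : ℝ) (hl : 0 < l) (hlL : l ≤ L)
    (hcurv : ∀ i z, l ≤ deriv (deriv (f i)) z ∧ deriv (deriv (f i)) z ≤ L)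
    (Q : EuclideanSpace ℝ (Fin p) → ℝ)
    (hQ : ∀ w, Q w = (1 / n : ℝ) * ∑ i, f i (inner ℝ (x i) w : ℝ))
    (gradQ : EuclideanSpace ℝ (Fin p) → EuclideanSpace ℝ (Fin p))
    (hgrad : ∀ w, HasGradientAt Q (gradQ w) w)
    (F : Finset (Fin p)) (hF : (Finset.univ : Finset F).Nonempty)
    (M : Matrix F F ℝ)
    (hM : ∀ a b : F, M a b = (1 / n : ℝ) * ∑ i, x i a * x i b)
    (hHerm : M.IsHermitian)
    (ρminus ρplus : ℝ)
    (hρm : ρminus = sInf {r | ∃ w u : EuclideanSpace ℝ (Fin p),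
      (∀ i ∉ F, u i = 0) ∧ u ≠ 0 ∧
      r = (Q (w + u) - Q w - (inner ℝ (gradQ w) u : ℝ)) / (1 / 2 * ‖u‖ ^ 2)})
    (hρp : ρplus = sSup {r | ∃ w u : EuclideanSpace ℝ (Fin p),
      (∀ i ∉ F, u i = 0) ∧ u ≠ 0 ∧
      r = (Q (w + u) - Q w - (inner ℝ (gradQ w) u : ℝ)) / (1 / 2 * ‖u‖ ^ 2)}) :
    l * Finset.univ.inf' hF hHerm.eigenvalues ≤ ρminus ∧
      ρplus ≤ L * Finset.univ.sup' hF hHerm.eigenvalues :=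
  stmt14_general x f hf l L hl hlL hcurv Q hQ gradQ hgrad F hF M hM hHerm ρminus ρplus hρm hρp
end
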